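/- arXiv:0904.0073 — 6 statements merged into one kernel-verified Lean document; each statement's English description precedes it below -/
import Mathlib

section
/- Every bounded-above nonempty subset of the half-open long line L₊ has a least upper bound in L₊ (i.e., L₊ is conditionally complete). -/
/-- The set of countable ordinals (ordinals less than the first uncountable ordinal `ω₁`). -/
def SOmega : Type 1 := Set.Iio (Cardinal.aleph 1).ord

noncomputable instance : LinearOrder SOmega :=
  inferInstanceAs (LinearOrder (Set.Iio (Cardinal.aleph 1).ord))

/-- The half-open long line `L₊ = [0,1) × S_Ω` with the lexicographic order
(ordinal coordinate first, then the real coordinate). -/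
def LongLinePlus : Type 1 := SOmega ×ₗ (Set.Ico (0:ℝ) 1)

noncomputable instance : LinearOrder LongLinePlus :=
  inferInstanceAs (LinearOrder (SOmega ×ₗ (Set.Ico (0:ℝ) 1)))

/-- `L₊` carries the order topology. -/
noncomputable instance : TopologicalSpace LongLinePlus := Preorder.topology LongLinePlus
instance : OrderTopology LongLinePlus := ⟨rfl⟩

/-!
Let `a` be the supremum of the ordinal coordinates of `s` and `F` the fibre of `s` over `a`,
i.e. the real coordinates of the points of `s` with ordinal coordinate `a`. If `F` has a least
upper bound `t` in `[0,1)` (`t = 0` when `F` is empty), then `(a, t)` is the least upper bound of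
`s`. Otherwise `F` creeps up to `1`, and the least upper bound is `(a + 1, 0)`, which lies in `L₊`
because `ω₁` is a limit ordinal.
-/

namespace Prod.Lex

variable {α β : Type*}

theorem isLUB_toLex [PartialOrder α] [Preorder β] {s : Set (α ×ₗ β)} {a : α} {b : β}
    (ha : IsLUB ((fun p => (ofLex p).1) '' s) a) (hb : IsLUB {y | toLex (a, y) ∈ s} b) :
    IsLUB s (toLex (a, b)) := by
  refine ⟨fun p hp => le_iff'.2 ⟨ha.1 ⟨p, hp, rfl⟩, fun h => hb.1 ?_⟩,
    fun u hu => le_iff'.2 ⟨ha.2 ?_, fun h => hb.2 fun y hy => (le_iff'.1 (hu hy)).2 h⟩⟩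
  · change (ofLex p).1 = a at h
    change toLex (a, (ofLex p).2) ∈ s
    rwa [← h]
  · rintro _ ⟨p, hp, rfl⟩
    exact monotone_fst _ _ (hu hp)

theorem isLUB_toLex_of_not_bddAbove [LinearOrder α] [Preorder β] {s : Set (α ×ₗ β)}
    {a a' : α} {b : β} (ha : IsLUB ((fun p => (ofLex p).1) '' s) a)
    (hfiber : ¬BddAbove {y | toLex (a, y) ∈ s}) (hcov : a ⋖ a') (hb : IsBot b) :
    IsLUB s (toLex (a', b)) := by
  refine ⟨fun p hp => (toLex_lt_toLex.2 (.inl ((ha.1 ⟨p, hp, rfl⟩).trans_lt hcov.lt))).le,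
    fun u hu => le_iff'.2 ⟨hcov.ge_of_gt ?_, fun _ => hb _⟩⟩
  have hau : a ≤ (ofLex u).1 := ha.2 <| by
    rintro _ ⟨p, hp, rfl⟩
    exact monotone_fst _ _ (hu hp)
  refine hau.lt_of_ne fun h => hfiber ⟨(ofLex u).2, fun y hy => ?_⟩
  exact (le_iff'.1 (hu hy)).2 h

theorem exists_isLUB [ConditionallyCompleteLinearOrder α] [SuccOrder α] [NoMaxOrder α]
    [ConditionallyCompleteLinearOrder β] [OrderBot β] {s : Set (α ×ₗ β)}
    (hne : s.Nonempty) (hbdd : BddAbove s) : ∃ c, IsLUB s c := by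
  obtain ⟨a, ha⟩ : ∃ a, IsLUB ((fun p => (ofLex p).1) '' s) a :=
    ⟨_, isLUB_csSup (hne.image _) (monotone_fst_ofLex.map_bddAbove hbdd)⟩
  by_cases hfiber : BddAbove {y | toLex (a, y) ∈ s}
  · obtain ⟨b, hb⟩ : ∃ b, IsLUB {y | toLex (a, y) ∈ s} b := by
      rcases Set.eq_empty_or_nonempty {y | toLex (a, y) ∈ s} with hempty | hfiber_ne
      · exact ⟨⊥, hempty ▸ isLUB_empty⟩
      · exact ⟨_, isLUB_csSup hfiber_ne hfiber⟩
    exact ⟨_, isLUB_toLex ha hb⟩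
  · exact ⟨_, isLUB_toLex_of_not_bddAbove ha hfiber (Order.covBy_succ a) isBot_bot⟩

end Prod.Lex

theorem isSuccLimit_ord_aleph_one : Order.IsSuccLimit (Cardinal.aleph 1).ord :=
  Cardinal.isSuccLimit_ord (Cardinal.aleph0_le_aleph 1)

instance : Nonempty SOmega := isSuccLimit_ord_aleph_one.nonempty_Iio.to_subtype

instance : NoMaxOrder SOmega := isSuccLimit_ord_aleph_one.isSuccPrelimit.noMaxOrder_Iio

instance : WellFoundedLT SOmega := inferInstanceAs (WellFoundedLT (Set.Iio _))

noncomputable instance : OrderBot SOmega := WellFoundedLT.toOrderBot _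

noncomputable instance : SuccOrder SOmega := SuccOrder.ofLinearWellFoundedLT SOmega

noncomputable instance : ConditionallyCompleteLinearOrderBot SOmega :=
  WellFoundedLT.conditionallyCompleteLinearOrderBot SOmega

instance : Inhabited (Set.Ico (0:ℝ) 1) := ⟨⊥⟩

/-- Every nonempty bounded-above subset of `L₊` has a least upper bound. -/
theorem longLinePlus_exists_isLUB (s : Set LongLinePlus) (hne : s.Nonempty)
    (hbdd : BddAbove s) : ∃ b : LongLinePlus, IsLUB s b :=
  Prod.Lex.exists_isLUB (α := SOmega) (β := Set.Ico (0:ℝ) 1) hne hbdd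
end

section
/- Every continuous function f : L₊ × L₊ → ℝ is constant on a tail square: there exists μ ∈ L₊ such that f is constant on the set {(x,y) : x > μ, y > μ}. -/
/-! If `f` oscillated by at least `ε` on every tail square, then starting anywhere and repeatedly
jumping to a level above a bad pair of points beyond the current level would give an increasing
sequence of levels with a bad pair between any two consecutive ones. Countable sets of countable
ordinals are bounded, so these levels converge in `L₊`, the bad pairs converge to the diagonal point
of the limit, and continuity there is contradicted. So the oscillation is below `1 / (n + 1)` beyond
some `μₙ`, and a common upper bound of the countably many `μₙ` works. -/

open Filter Topology Set

section TailSquare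

variable {X Y : Type*} [LinearOrder X] [TopologicalSpace X] [OrderTopology X]

theorem tendsto_nhds_diag_of_mem_Icc {a : ℕ → X} {L : X} (ha : Tendsto a atTop (𝓝 L))
    {p : ℕ → X × X} (hp : ∀ n, p n ∈ Icc (a n, a n) (a (n + 1), a (n + 1))) :
    Tendsto p atTop (𝓝 (L, L)) := by
  have ha' : Tendsto (fun n => a (n + 1)) atTop (𝓝 L) := ha.comp (tendsto_add_atTop_nat 1)
  exact (tendsto_of_tendsto_of_tendsto_of_le_of_le ha ha' (fun n => (hp n).1.1)
    fun n => (hp n).2.1).prodMk_nhds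
      (tendsto_of_tendsto_of_tendsto_of_le_of_le ha ha' (fun n => (hp n).1.2) fun n => (hp n).2.2)

variable [Nonempty X] {C : Set X} (hbdd : ∀ u : ℕ → X, ∃ c ∈ C, ∀ n, u n ≤ c)
  (hlim : ∀ a : ℕ → X, Monotone a → (∀ n, a n ∈ C) → ∃ L, Tendsto a atTop (𝓝 L))
include hbdd hlim

theorem exists_tail_dist_lt [PseudoMetricSpace Y] {f : X × X → Y} (hf : Continuous f) {ε : ℝ}
    (hε : 0 < ε) :
    ∃ μ : X, ∀ p ∈ Ioi μ ×ˢ Ioi μ, ∀ q ∈ Ioi μ ×ˢ Ioi μ, dist (f p) (f q) < ε := by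
  by_contra! hbad
  choose P hP Q hQ hPQ using hbad
  have hnext : ∀ μ, ∃ c ∈ C, max (P μ).1 (P μ).2 ≤ c ∧ max (Q μ).1 (Q μ).2 ≤ c := fun μ => by
    obtain ⟨c, hc, hle⟩ := hbdd fun _ => max (max (P μ).1 (P μ).2) (max (Q μ).1 (Q μ).2)
    exact ⟨c, hc, le_of_max_le_left (hle 0), le_of_max_le_right (hle 0)⟩
  choose next hnextC hnextP hnextQ using hnext
  let a : ℕ → X := fun n => next^[n + 1] (Classical.arbitrary X)
  have ha_succ : ∀ n, a (n + 1) = next (a n) := fun n => Function.iterate_succ_apply' ..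
  have hPa : ∀ n, P (a n) ∈ Icc (a n, a n) (a (n + 1), a (n + 1)) := fun n => by
    rw [ha_succ]
    exact ⟨⟨(hP _).1.le, (hP _).2.le⟩, max_le_iff.1 (hnextP _)⟩
  have hQa : ∀ n, Q (a n) ∈ Icc (a n, a n) (a (n + 1), a (n + 1)) := fun n => by
    rw [ha_succ]
    exact ⟨⟨(hQ _).1.le, (hQ _).2.le⟩, max_le_iff.1 (hnextQ _)⟩
  have ha_mono : Monotone a := monotone_nat_of_le_succ fun n => (hPa n).1.1.trans (hPa n).2.1
  have haC : ∀ n, a n ∈ C := fun n => by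
    simp only [a, Function.iterate_succ_apply']
    exact hnextC _
  obtain ⟨L, hL⟩ := hlim a ha_mono haC
  have hdist : Tendsto (fun n => dist (f (P (a n))) (f (Q (a n)))) atTop (𝓝 0) := by
    simpa using ((hf.tendsto _).comp (tendsto_nhds_diag_of_mem_Icc hL hPa)).dist
      ((hf.tendsto _).comp (tendsto_nhds_diag_of_mem_Icc hL hQa))
  obtain ⟨n, hn⟩ := ((tendsto_order.1 hdist).2 ε hε).exists
  exact (hPQ _).not_gt hn

theorem exists_tail_const [MetricSpace Y] {f : X × X → Y} (hf : Continuous f) :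
    ∃ μ : X, ∀ p ∈ Ioi μ ×ˢ Ioi μ, ∀ q ∈ Ioi μ ×ˢ Ioi μ, f p = f q := by
  choose μ hμ using fun n : ℕ => exists_tail_dist_lt hbdd hlim hf (Nat.one_div_pos_of_nat (n := n))
  obtain ⟨b, -, hb⟩ := hbdd μ
  have hsub : ∀ n, Ioi b ×ˢ Ioi b ⊆ Ioi (μ n) ×ˢ Ioi (μ n) := fun n =>
    prod_mono (Ioi_subset_Ioi (hb n)) (Ioi_subset_Ioi (hb n))
  refine ⟨b, fun p hp q hq => eq_of_forall_dist_le fun ε hε => ?_⟩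
  obtain ⟨n, hn⟩ := exists_nat_one_div_lt hε
  exact (hμ n p (hsub n hp) q (hsub n hq)).le.trans hn.le

end TailSquare

namespace SOmega

theorem exists_isLUB_range (β : ℕ → SOmega) : ∃ σ : SOmega, IsLUB (range β) σ := by
  have hω : (Cardinal.aleph 1).ord = Ordinal.omega 1 := Cardinal.ord_aleph 1
  have hlt : ⨆ n, (β n).1 < (Cardinal.aleph 1).ord :=
    (Ordinal.iSup_lt_omega_one fun n => (β n).2.trans_eq hω).trans_eq hω.symm
  refine ⟨⟨_, hlt⟩, ?_, fun s hs => ?_⟩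
  · rintro _ ⟨n, rfl⟩
    exact Subtype.coe_le_coe.1 (Ordinal.le_iSup _ n)
  · exact Subtype.coe_le_coe.1 (Ordinal.iSup_le fun n => Subtype.coe_le_coe.2 (hs ⟨n, rfl⟩))

theorem exists_forall_lt (β : ℕ → SOmega) : ∃ s : SOmega, ∀ n, β n < s := by
  obtain ⟨σ, hσ⟩ := exists_isLUB_range β
  have hsucc : Order.succ σ.1 < (Cardinal.aleph 1).ord :=
    (Cardinal.isSuccLimit_ord (Cardinal.aleph0_le_aleph 1)).succ_lt σ.2
  exact ⟨⟨_, hsucc⟩, fun n => (hσ.1 ⟨n, rfl⟩).trans_lt (Subtype.coe_lt_coe.1 (Order.lt_succ σ.1))⟩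

end SOmega

namespace LongLinePlus

noncomputable def level (s : SOmega) : LongLinePlus := toLex (s, ⟨0, left_mem_Ico.2 one_pos⟩)

noncomputable def ordPart (x : LongLinePlus) : SOmega :=
  (ofLex (show SOmega ×ₗ Ico (0 : ℝ) 1 from x)).1

theorem lt_level_iff {x : LongLinePlus} {s : SOmega} : x < level s ↔ ordPart x < s := by
  refine Prod.Lex.lt_iff.trans ⟨?_, Or.inl⟩
  rintro (h | ⟨-, h⟩)
  · exact h
  · exact absurd h (not_lt.2 (ofLex (show SOmega ×ₗ Ico (0 : ℝ) 1 from x)).2.2.1)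

theorem level_strictMono : StrictMono level := fun _ _ hst => lt_level_iff.2 hst

theorem exists_forall_lt_level (u : ℕ → LongLinePlus) : ∃ s, ∀ n, u n < level s :=
  (SOmega.exists_forall_lt (ordPart ∘ u)).imp fun _ hs n => lt_level_iff.2 (hs n)

theorem isLUB_range_level {β : ℕ → SOmega} {σ : SOmega} (hσ : IsLUB (range β) σ) :
    IsLUB (range (level ∘ β)) (level σ) := by
  refine ⟨?_, fun y hy => not_lt.1 fun hlt => ?_⟩
  · rintro _ ⟨n, rfl⟩
    exact level_strictMono.monotone (hσ.1 ⟨n, rfl⟩)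
  · obtain ⟨_, ⟨n, rfl⟩, hn⟩ := (lt_isLUB_iff hσ).1 (lt_level_iff.1 hlt)
    exact (hy ⟨n, rfl⟩).not_gt (lt_level_iff.2 hn)

theorem tendsto_of_monotone_of_mem_range_level {a : ℕ → LongLinePlus} (ha : Monotone a)
    (hlevel : ∀ n, a n ∈ range level) : ∃ L, Tendsto a atTop (𝓝 L) := by
  choose β hβ using hlevel
  obtain ⟨σ, hσ⟩ := SOmega.exists_isLUB_range β
  have : a = level ∘ β := funext fun n => (hβ n).symm
  exact ⟨level σ, tendsto_atTop_isLUB ha (this ▸ isLUB_range_level hσ)⟩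

end LongLinePlus

/-- Every continuous function `f : L₊ × L₊ → ℝ` is constant on a tail square
`{(x,y) : x > μ, y > μ}` for some `μ ∈ L₊`. -/
theorem longLinePlus_sq_continuous_constant_on_tail (f : LongLinePlus × LongLinePlus → ℝ)
    (hf : Continuous f) :
    ∃ μ : LongLinePlus, ∀ p q : LongLinePlus × LongLinePlus,
      μ < p.1 → μ < p.2 → μ < q.1 → μ < q.2 → f p = f q := by
  have : Nonempty LongLinePlus :=
    ⟨LongLinePlus.level ⟨0, Cardinal.ord_pos.2 (Cardinal.aleph_pos 1)⟩⟩
  have hbdd (u : ℕ → LongLinePlus) : ∃ c ∈ range LongLinePlus.level, ∀ n, u n ≤ c :=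
    (LongLinePlus.exists_forall_lt_level u).elim fun s hs => ⟨_, ⟨s, rfl⟩, fun n => (hs n).le⟩
  obtain ⟨μ, hμ⟩ := exists_tail_const hbdd
    (fun _ => LongLinePlus.tendsto_of_monotone_of_mem_range_level) hf
  exact ⟨μ, fun p q hp1 hp2 hq1 hq2 => hμ p ⟨hp1, hp2⟩ q ⟨hq1, hq2⟩⟩
end

section
/- For every n ≥ 1, every continuous function f : L₊ⁿ → ℝ is constant on a tail cube: there exists μ ∈ L₊ such that f is constant on the set {x ∈ L₊ⁿ : xᵢ > μ for all i}. -/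
/-! If `f` were not constant on any tail cube, then for some `ε > 0` every tail cube would contain
points `x, y` with `dist (f x) (f y) ≥ ε`: countably many `ε = 1/(m+1)` suffice, and countable sets
are bounded in `L₊`. Build a ladder `β₀ < β₁ < ⋯` with such a pair between `βₖ` and `βₖ₊₁`. In `L₊`
increasing sequences converge, so `βₖ → p` and both sequences of pairs converge to the constant
point `p`, contradicting continuity of `f` there. -/

open Filter Topology Set

theorem Cardinal.exists_gt_of_countable_Iio_ord_aleph_one
    {S : Set (Iio (Cardinal.aleph 1).ord)} (hS : S.Countable) : ∃ b, ∀ a ∈ S, a < b := by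
  have : Countable S := hS.to_subtype
  have hsup : ⨆ a : S, Order.succ (a : Ordinal) < Ordinal.omega 1 :=
    Ordinal.iSup_lt_omega_one fun a => (Cardinal.isSuccLimit_omega 1).succ_lt
      ((a : Iio _).2.trans_eq (Cardinal.ord_aleph 1))
  refine ⟨⟨_, hsup.trans_eq (Cardinal.ord_aleph 1).symm⟩, fun a ha => ?_⟩
  exact (Order.lt_succ (a : Ordinal)).trans_le
    (Ordinal.le_iSup (fun a : S => Order.succ (a : Ordinal)) ⟨a, ha⟩)

theorem Set.Ico.exists_isGLB {α : Type*} [ConditionallyCompleteLinearOrder α] {a b : α}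
    {T : Set (Ico a b)} (hT : T.Nonempty) : ∃ r, IsGLB T r := by
  obtain ⟨t, ht⟩ := hT
  have hne : (Subtype.val '' T).Nonempty := ⟨t, t, ht, rfl⟩
  have hbdd : BddBelow (Subtype.val '' T) := ⟨a, by rintro _ ⟨s, -, rfl⟩; exact s.2.1⟩
  refine ⟨⟨sInf (Subtype.val '' T), le_csInf hne (by rintro _ ⟨s, -, rfl⟩; exact s.2.1),
    (csInf_le hbdd ⟨t, ht, rfl⟩).trans_lt t.2.2⟩, fun s hs => ?_, fun s hs => ?_⟩
  · exact csInf_le hbdd ⟨s, hs, rfl⟩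
  · exact le_csInf hne (by rintro _ ⟨u, hu, rfl⟩; exact hs hu)

/-- The supremum is `(a, r)`, where `a` is the least first coordinate of an upper bound and `r` is
the infimum of the second coordinates of the upper bounds with first coordinate `a`. -/
theorem Prod.Lex.exists_isLUB_s5 {α β : Type*} [LinearOrder α] [WellFoundedLT α] [LinearOrder β]
    (hβ : ∀ T : Set β, T.Nonempty → ∃ r, IsGLB T r) {S : Set (α ×ₗ β)} (hS : BddAbove S) :
    ∃ p, IsLUB S p := by
  obtain ⟨_, ⟨u, hu, rfl⟩, hmin⟩ :=
    wellFounded_lt.has_min ((fun v => (ofLex v).1) '' upperBounds S) (hS.image _)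
  set a := (ofLex u).1
  obtain ⟨r, hr⟩ := hβ {b | toLex (a, b) ∈ upperBounds S} ⟨(ofLex u).2, by simpa [a] using hu⟩
  refine ⟨toLex (a, r), fun s hs => ?_, fun v hv => ?_⟩
  · rcases Prod.Lex.le_iff.1 (hu hs) with h | ⟨h, -⟩
    · exact Prod.Lex.le_iff.2 (Or.inl h)
    · refine Prod.Lex.le_iff.2 (Or.inr ⟨h, hr.2 fun b hb => ?_⟩)
      exact ((Prod.Lex.le_iff.1 (hb hs)).resolve_left (by simp [a, h])).2
  · have hva : a ≤ (ofLex v).1 := not_lt.1 (hmin _ ⟨v, hv, rfl⟩)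
    rcases hva.lt_or_eq with h | h
    · exact Prod.Lex.le_iff.2 (Or.inl h)
    · refine Prod.Lex.le_iff.2 (Or.inr ⟨h, hr.1 ?_⟩)
      simpa [h] using hv

section TailConstant

variable {α ι E : Type*} [LinearOrder α] [TopologicalSpace α]

theorem exists_tendsto_ladder (hbdd : ∀ s : Set α, s.Countable → ∃ b, ∀ a ∈ s, a < b)
    (hconv : ∀ u : ℕ → α, Monotone u → ∃ p, Tendsto u atTop (𝓝 p))
    (C : α → Set α) (hC : ∀ a, (C a).Countable) :
    ∃ (β : ℕ → α) (p : α), Tendsto β atTop (𝓝 p) ∧ ∀ k, ∀ a ∈ C (β k), a < β (k + 1) := by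
  choose next hnext using fun a => hbdd (insert a (C a)) ((hC a).insert a)
  obtain ⟨a₀, -⟩ := hbdd ∅ countable_empty
  have hsucc (k : ℕ) : next^[k + 1] a₀ = next (next^[k] a₀) := Function.iterate_succ_apply' ..
  have hmono : Monotone fun k => next^[k] a₀ := monotone_nat_of_le_succ fun k => by
    rw [hsucc]; exact (hnext _ _ (mem_insert _ _)).le
  obtain ⟨p, hp⟩ := hconv _ hmono
  exact ⟨_, p, hp, fun k a ha => by rw [hsucc]; exact hnext _ a (mem_insert_of_mem _ ha)⟩

variable [OrderTopology α]

theorem tendsto_pi_of_le_of_le_succ {β : ℕ → α} {p : α} (hβ : Tendsto β atTop (𝓝 p))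
    {z : ℕ → ι → α} (hlo : ∀ k i, β k ≤ z k i) (hhi : ∀ k i, z k i ≤ β (k + 1)) :
    Tendsto z atTop (𝓝 fun _ => p) :=
  tendsto_pi_nhds.2 fun i => tendsto_of_tendsto_of_tendsto_of_le_of_le hβ
    (hβ.comp (tendsto_add_atTop_nat 1)) (fun k => hlo k i) (fun k => hhi k i)

variable [Countable ι] [MetricSpace E]

theorem exists_tail_dist_lt_s5 (hbdd : ∀ s : Set α, s.Countable → ∃ b, ∀ a ∈ s, a < b)
    (hconv : ∀ u : ℕ → α, Monotone u → ∃ p, Tendsto u atTop (𝓝 p))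
    {f : (ι → α) → E} (hf : Continuous f) {ε : ℝ} (hε : 0 < ε) :
    ∃ μ, ∀ x y : ι → α, (∀ i, μ < x i) → (∀ i, μ < y i) → dist (f x) (f y) < ε := by
  by_contra! h
  choose X Y hX hY hXY using h
  obtain ⟨β, p, hβ, hstep⟩ := exists_tendsto_ladder hbdd hconv
    (fun μ => range (X μ) ∪ range (Y μ)) fun μ => (countable_range _).union (countable_range _)
  have hx := tendsto_pi_of_le_of_le_succ hβ (fun k i => (hX (β k) i).le)
    fun k i => (hstep k _ (Or.inl ⟨i, rfl⟩)).le
  have hy := tendsto_pi_of_le_of_le_succ hβ (fun k i => (hY (β k) i).le)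
    fun k i => (hstep k _ (Or.inr ⟨i, rfl⟩)).le
  have hdist : Tendsto (fun k => dist (f (X (β k))) (f (Y (β k)))) atTop (𝓝 0) := by
    simpa using ((hf.tendsto _).comp hx).dist ((hf.tendsto _).comp hy)
  exact hε.not_ge (ge_of_tendsto' hdist fun k => hXY (β k))

theorem exists_tail_const_s5 (hbdd : ∀ s : Set α, s.Countable → ∃ b, ∀ a ∈ s, a < b)
    (hconv : ∀ u : ℕ → α, Monotone u → ∃ p, Tendsto u atTop (𝓝 p))
    {f : (ι → α) → E} (hf : Continuous f) :
    ∃ μ, ∀ x y : ι → α, (∀ i, μ < x i) → (∀ i, μ < y i) → f x = f y := by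
  choose μ hμ using fun m : ℕ =>
    exists_tail_dist_lt_s5 hbdd hconv hf (Nat.one_div_pos_of_nat (n := m))
  obtain ⟨b, hb⟩ := hbdd (range μ) (countable_range μ)
  refine ⟨b, fun x y hx hy => eq_of_forall_dist_le fun ε hε => ?_⟩
  obtain ⟨m, hm⟩ := exists_nat_one_div_lt hε
  exact (hμ m x y (fun i => (hb _ ⟨m, rfl⟩).trans (hx i))
    fun i => (hb _ ⟨m, rfl⟩).trans (hy i)).le.trans hm.le

end TailConstant

instance inst_s5 : WellFoundedLT SOmega := inferInstanceAs (WellFoundedLT (Iio (Cardinal.aleph 1).ord))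

namespace LongLinePlus

theorem exists_gt_of_countable (S : Set LongLinePlus) (hS : S.Countable) :
    ∃ b, ∀ a ∈ S, a < b := by
  obtain ⟨γ, hγ⟩ := Cardinal.exists_gt_of_countable_Iio_ord_aleph_one
    (hS.image fun a : LongLinePlus => (ofLex a).1)
  exact ⟨toLex (γ, ⟨0, by norm_num⟩), fun a ha => Prod.Lex.lt_iff.2 (Or.inl (hγ _ ⟨a, ha, rfl⟩))⟩

theorem exists_isLUB_s5 {S : Set LongLinePlus} (hS : BddAbove S) : ∃ p, IsLUB S p :=
  Prod.Lex.exists_isLUB_s5 (fun _ => Set.Ico.exists_isGLB) hS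

theorem exists_tendsto_of_monotone {u : ℕ → LongLinePlus} (hu : Monotone u) :
    ∃ p, Tendsto u atTop (𝓝 p) := by
  obtain ⟨b, hb⟩ := exists_gt_of_countable (range u) (countable_range u)
  obtain ⟨p, hp⟩ := exists_isLUB_s5 ⟨b, fun a ha => (hb a ha).le⟩
  exact ⟨p, tendsto_atTop_isLUB hu hp⟩

end LongLinePlus

theorem longLinePlus_pow_continuous_constant_on_tail_general (n : ℕ)
    (f : (Fin n → LongLinePlus) → ℝ) (hf : Continuous f) :
    ∃ μ : LongLinePlus, ∀ x y : Fin n → LongLinePlus,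
      (∀ i, μ < x i) → (∀ i, μ < y i) → f x = f y :=
  exists_tail_const_s5 LongLinePlus.exists_gt_of_countable
    (fun _ => LongLinePlus.exists_tendsto_of_monotone) hf

/-- For `n ≥ 1`, every continuous function `f : L₊ⁿ → ℝ` is constant on a tail cube
`{x : ∀ i, xᵢ > μ}` for some `μ ∈ L₊`. -/
theorem longLinePlus_pow_continuous_constant_on_tail (n : ℕ) (hn : 1 ≤ n)
    (f : (Fin n → LongLinePlus) → ℝ) (hf : Continuous f) :
    ∃ μ : LongLinePlus, ∀ x y : Fin n → LongLinePlus,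
      (∀ i, μ < x i) → (∀ i, μ < y i) → f x = f y :=
  longLinePlus_pow_continuous_constant_on_tail_general n f hf
end

section
/- Every continuous function h : L̄₊ⁿ → [0,1] is constant on some neighbourhood of the point ₙ = (Ω, …, Ω): there exists λ < Ω such that h is constant on (λ, Ω]ⁿ. -/
/-- The extended half-long line `L̄₊ = L₊ ∪ {Ω}`, with `Ω` adjoined as a top element,
given the order topology. -/
def LongLinePlusBar : Type 1 := WithTop LongLinePlus

noncomputable instance : LinearOrder LongLinePlusBar :=
  inferInstanceAs (LinearOrder (WithTop LongLinePlus))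

instance : OrderTop LongLinePlusBar := inferInstanceAs (OrderTop (WithTop LongLinePlus))

noncomputable instance : TopologicalSpace LongLinePlusBar := Preorder.topology LongLinePlusBar
instance : OrderTopology LongLinePlusBar := ⟨rfl⟩

/-- The inclusion `L₊ ↪ L̄₊`. -/
def LongLinePlus.toBar (x : LongLinePlus) : LongLinePlusBar := WithTop.some x

/-!
A countable family of points below `Ω` is bounded below `Ω`, because `ω₁` is regular.
The value `h (Ω, …, Ω)` has a countable neighbourhood basis `(u k)`; the preimage of each `u k`
contains a box `(λ_k, Ω]ⁿ`, and on the box over an upper bound `λ < Ω` of the `λ_k` the value of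
`h` lies in every `u k`, hence equals `h (Ω, …, Ω)`.
-/

open Filter Topology Set

section OrderTop

variable {α : Type*} [LinearOrder α] [OrderTop α] [TopologicalSpace α] [OrderTopology α]

lemma exists_lt_top_pi_subset_of_mem_nhds_top [Nontrivial α] {ι : Type*} [Finite ι]
    {s : Set (ι → α)} (hs : s ∈ 𝓝 fun _ => ⊤) :
    ∃ a < ⊤, {x | ∀ i, a < x i} ⊆ s := by
  rw [nhds_pi, Filter.mem_pi] at hs
  obtain ⟨I, -, t, ht, hts⟩ := hs
  obtain ⟨a₀, ha₀⟩ : ∃ a : α, a < ⊤ := (exists_ne ⊤).imp fun _ => lt_top_iff_ne_top.2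
  have : Nonempty (Iio (⊤ : α)) := ⟨⟨a₀, ha₀⟩⟩
  have hl (i : ι) : ∃ l : Iio (⊤ : α), Ioc (l : α) ⊤ ⊆ t i := by
    obtain ⟨l, hl, hlt⟩ := exists_Ioc_subset_of_mem_nhds (ht i) ⟨a₀, ha₀⟩
    exact ⟨⟨l, hl⟩, hlt⟩
  choose l hlt using hl
  obtain ⟨a, hla⟩ := Finite.exists_le l
  exact ⟨a, a.2, fun x hx => hts fun i _ =>
    hlt i ⟨(Subtype.coe_le_coe.2 (hla i)).trans_lt (hx i), le_top⟩⟩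

theorem Continuous.exists_lt_top_forall_eq_apply_top [Nontrivial α]
    (hbdd : ∀ f : ℕ → α, (∀ k, f k < ⊤) → ∃ a < ⊤, ∀ k, f k ≤ a)
    {ι : Type*} [Finite ι] {Y : Type*} [TopologicalSpace Y] [FirstCountableTopology Y]
    [T1Space Y] {f : (ι → α) → Y} (hf : Continuous f) :
    ∃ a < ⊤, ∀ x, (∀ i, a < x i) → f x = f fun _ => ⊤ := by
  obtain ⟨u, hu⟩ := (𝓝 (f fun _ => ⊤)).exists_antitone_basis
  have hbox (k : ℕ) : ∃ a < ⊤, {x | ∀ i, a < x i} ⊆ f ⁻¹' u k :=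
    exists_lt_top_pi_subset_of_mem_nhds_top (hf.continuousAt.preimage_mem_nhds (hu.mem k))
  choose a ha hau using hbox
  obtain ⟨b, hb, hab⟩ := hbdd a ha
  refine ⟨b, hb, fun x hx => ?_⟩
  have hmem (k : ℕ) : f x ∈ u k := hau k fun i => (hab k).trans_lt (hx i)
  refine (specializes_iff_pure.2 ?_).eq
  exact hu.toHasBasis.ge_iff.2 fun k _ => hmem k

end OrderTop

lemma SOmega.exists_forall_lt_s9 (f : ℕ → SOmega) : ∃ b : SOmega, ∀ k, f k < b := by
  have hcof : Cardinal.mk ℕ < (Cardinal.aleph 1).ord.cof := by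
    rw [Cardinal.isRegular_aleph_one.cof_ord, Cardinal.mk_nat]
    exact Cardinal.aleph0_lt_aleph_one
  have hsup : ⨆ k, Order.succ (f k).1 < (Cardinal.aleph 1).ord :=
    Ordinal.iSup_lt_of_lt_cof hcof fun k =>
      (Cardinal.isSuccLimit_ord (Cardinal.aleph0_le_aleph 1)).succ_lt (f k).2
  refine ⟨⟨_, hsup⟩, fun k => ?_⟩
  show (f k).1 < _
  exact (Order.lt_succ _).trans_le (Ordinal.le_iSup (fun k => Order.succ (f k).1) k)

lemma LongLinePlus.exists_forall_lt_s9 (f : ℕ → LongLinePlus) : ∃ b : LongLinePlus, ∀ k, f k < b := by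
  obtain ⟨b, hb⟩ := SOmega.exists_forall_lt_s9 fun k => (ofLex (f k)).1
  exact ⟨toLex (b, ⟨0, le_rfl, zero_lt_one⟩), fun k => Prod.Lex.lt_iff.2 (Or.inl (hb k))⟩

instance : Nontrivial LongLinePlusBar :=
  have : Nonempty SOmega := ⟨⟨0, Cardinal.ord_pos.2 (Cardinal.aleph_pos 1)⟩⟩
  have : Nonempty LongLinePlus := ⟨toLex (Classical.arbitrary SOmega, ⟨0, le_rfl, zero_lt_one⟩)⟩
  inferInstanceAs (Nontrivial (WithTop LongLinePlus))

lemma LongLinePlusBar.exists_lt_top_forall_le (f : ℕ → LongLinePlusBar) (hf : ∀ k, f k < ⊤) :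
    ∃ a < ⊤, ∀ k, f k ≤ a := by
  choose g hg using fun k => WithTop.ne_top_iff_exists.1 (hf k).ne
  obtain ⟨b, hb⟩ := LongLinePlus.exists_forall_lt_s9 g
  exact ⟨b.toBar, WithTop.coe_lt_top b, fun k => hg k ▸ WithTop.coe_le_coe.2 (hb k).le⟩

/-- Every continuous `h : L̄₊ⁿ → [0,1]` is constant on a neighbourhood `(λ, Ω]ⁿ` of
`(Ω, …, Ω)` for some `λ < Ω`. -/
theorem longLinePlusBar_pow_constant_near_top (n : ℕ)
    (h : (Fin n → LongLinePlusBar) → Set.Icc (0:ℝ) 1) (hh : Continuous h) :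
    ∃ lam : LongLinePlus, ∀ x y : Fin n → LongLinePlusBar,
      (∀ i, lam.toBar < x i) → (∀ i, lam.toBar < y i) → h x = h y := by
  obtain ⟨a, ha, hconst⟩ :=
    hh.exists_lt_top_forall_eq_apply_top LongLinePlusBar.exists_lt_top_forall_le
  obtain ⟨lam, rfl⟩ := WithTop.ne_top_iff_exists.1 ha.ne
  exact ⟨lam, fun x y hx hy => (hconst x hx).trans (hconst y hy).symm⟩
end

section
/- The extended long line L̄ has exactly 3 path components: {-Ω}, {Ω}, and L. -/
/-- The strictly positive part of `L₊` (elements other than the minimum `0`). -/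
def LongLinePlusPos : Type 1 := {x : LongLinePlus // ∃ y, y < x}

noncomputable instance : LinearOrder LongLinePlusPos :=
  inferInstanceAs (LinearOrder {x : LongLinePlus // ∃ y, y < x})

/-- The long line `L`: a reversed copy of `L₊ \ {0}` followed by `L₊`,
i.e. two copies of `L₊` glued at `0` with the first copy order-reversed. -/
def LongLine : Type 1 := (LongLinePlusPos)ᵒᵈ ⊕ₗ LongLinePlus

noncomputable instance : LinearOrder LongLine :=
  inferInstanceAs (LinearOrder ((LongLinePlusPos)ᵒᵈ ⊕ₗ LongLinePlus))

noncomputable instance : TopologicalSpace LongLine := Preorder.topology LongLine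
instance : OrderTopology LongLine := ⟨rfl⟩

/-- The extended long line `L̄ = {-Ω} ∪ L ∪ {Ω}`, obtained by adjoining a bottom element
`-Ω` and a top element `Ω` to `L`, with the order topology. -/
def LongLineBar : Type 1 := WithBot (WithTop LongLine)

noncomputable instance : LinearOrder LongLineBar :=
  inferInstanceAs (LinearOrder (WithBot (WithTop LongLine)))

noncomputable instance : OrderTop LongLineBar := inferInstanceAs (OrderTop (WithBot (WithTop LongLine)))
instance : OrderBot LongLineBar := inferInstanceAs (OrderBot (WithBot (WithTop LongLine)))

noncomputable instance : TopologicalSpace LongLineBar := Preorder.topology LongLineBar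
instance : OrderTopology LongLineBar := ⟨rfl⟩

/-- The inclusion `L ↪ L̄`. -/
def LongLine.toBar (x : LongLine) : LongLineBar := WithBot.some (WithTop.some x)

/-!
A countable set of countable ordinals is bounded in `ω₁`, so every countable subset of `L` is
bounded on both sides. Hence no sequence of `L̄ \ {-Ω}` converges to `-Ω`, and the set of times at
which a path starting at `-Ω` has left `-Ω` is closed as well as open, hence empty. The same holds
for `Ω`.

On the other hand `L₊` is Dedekind complete, and each of its bounded intervals has a countable
order-dense subset (countable ordinals times rationals). Embedding such a subset in `[0,1]` and
taking suprema gives a monotone surjection of `[0,1]` onto the interval, which is continuous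
because the interval is densely ordered. So `L₊` is path connected, and so is `L`, the union of
two copies of `L₊` glued at `0`.
-/

open Set

namespace Prod.Lex

variable {α β : Type*} [LinearOrder α] [LinearOrder β]

theorem isLUB_toLex_bot [OrderBot β] {s : Set (α ×ₗ β)} {a : α} (hlt : ∀ p ∈ s, (ofLex p).1 < a)
    (hge : ∀ q ∈ upperBounds s, a ≤ (ofLex q).1) : IsLUB s (toLex (a, ⊥)) :=
  ⟨fun p hp => le_iff.2 (Or.inl (hlt p hp)),
    fun q hq => le_iff.2 ((hge q hq).lt_or_eq.imp_right fun h => ⟨h, bot_le⟩)⟩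

theorem isLUB_toLex_of_isLUB_fiber {s : Set (α ×ₗ β)} {a : α} {b : β}
    (hle : ∀ p ∈ s, (ofLex p).1 ≤ a) (hge : ∀ q ∈ upperBounds s, a ≤ (ofLex q).1)
    (hb : IsLUB {c | toLex (a, c) ∈ s} b) :
    IsLUB s (toLex (a, b)) := by
  refine ⟨fun p hp => ?_, fun q hq => ?_⟩
  · rcases (hle p hp).lt_or_eq with h | h
    · exact le_iff.2 (Or.inl h)
    · refine le_iff.2 (Or.inr ⟨h, hb.1 ?_⟩)
      show toLex (a, _) ∈ s
      rw [← h]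
      exact hp
  · rcases (hge q hq).lt_or_eq with h | h
    · exact le_iff.2 (Or.inl h)
    · refine le_iff.2 (Or.inr ⟨h, hb.2 fun c hc => ?_⟩)
      rcases le_iff.1 (hq hc) with h' | h'
      · exact absurd h' (h ▸ lt_irrefl a)
      · exact h'.2

theorem exists_mem_image_prod_between [NoMaxOrder β] {A : Set α} {Q : Set β}
    (hQ : ∀ r r', r < r' → ∃ q ∈ Q, r < q ∧ q < r') {u v : α ×ₗ β} (huv : u < v)
    (hu : (ofLex u).1 ∈ A) :
    ∃ d ∈ toLex '' A ×ˢ Q, u < d ∧ d < v := by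
  rcases lt_iff.1 huv with h | ⟨h, h'⟩
  · obtain ⟨r, hr⟩ := exists_gt (ofLex u).2
    obtain ⟨q, hq, huq, -⟩ := hQ _ r hr
    exact ⟨toLex ((ofLex u).1, q), mem_image_of_mem _ ⟨hu, hq⟩,
      lt_iff.2 (Or.inr ⟨rfl, huq⟩), lt_iff.2 (Or.inl h)⟩
  · obtain ⟨q, hq, huq, hqv⟩ := hQ _ _ h'
    exact ⟨toLex ((ofLex u).1, q), mem_image_of_mem _ ⟨hu, hq⟩,
      lt_iff.2 (Or.inr ⟨rfl, huq⟩), lt_iff.2 (Or.inr ⟨h, hqv⟩)⟩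

end Prod.Lex

def DedekindComplete (α : Type*) [Preorder α] : Prop :=
  ∀ s : Set α, s.Nonempty → BddAbove s → ∃ a, IsLUB s a

namespace DedekindComplete

variable {α β : Type*}

theorem of_conditionallyCompleteLattice [ConditionallyCompleteLattice α] : DedekindComplete α :=
  fun _ hne hbdd => ⟨_, isLUB_csSup hne hbdd⟩

theorem of_wellFoundedLT [LinearOrder α] [WellFoundedLT α] : DedekindComplete α :=
  fun _ _ hbdd => ⟨_, wellFounded_lt.min_mem _ hbdd, fun _ hb => wellFounded_lt.min_le hb⟩

theorem subtype [Preorder α] (h : DedekindComplete α) (t : Set α) [t.OrdConnected] :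
    DedekindComplete t := by
  rintro s ⟨e, he⟩ ⟨b, hb⟩
  obtain ⟨a, hub, hleast⟩ := h (Subtype.val '' s) ⟨e, mem_image_of_mem _ he⟩
    ⟨b, forall_mem_image.2 fun c hc => hb hc⟩
  have hlub_le : ∀ c : t, c ∈ upperBounds s → a ≤ c :=
    fun c hc => hleast (forall_mem_image.2 fun _ hd => hc hd)
  refine ⟨⟨a, OrdConnected.out ‹_› e.2 b.2 ⟨hub (mem_image_of_mem _ he), hlub_le b hb⟩⟩,
    fun c hc => hub (mem_image_of_mem _ hc), hlub_le⟩

theorem prodLex [LinearOrder α] [WellFoundedLT α] [LinearOrder β] [OrderBot β]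
    (hβ : DedekindComplete β) : DedekindComplete (α ×ₗ β) := by
  intro s hne hbdd
  obtain ⟨a, ha⟩ := of_wellFoundedLT ((fun p => (ofLex p).1) '' s) (hne.image _)
    (Monotone.map_bddAbove (fun p q h => Prod.Lex.monotone_fst p q h) hbdd)
  have hle : ∀ p ∈ s, (ofLex p).1 ≤ a := fun p hp => ha.1 (mem_image_of_mem _ hp)
  have hge : ∀ q ∈ upperBounds s, a ≤ (ofLex q).1 := fun q hq =>
    ha.2 (forall_mem_image.2 fun p hp => Prod.Lex.monotone_fst _ _ (hq hp))
  by_cases haA : a ∈ (fun p => (ofLex p).1) '' s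
  · obtain ⟨p₀, hp₀, hp₀a⟩ := haA
    have hfiber : (ofLex p₀).2 ∈ {c | toLex (a, c) ∈ s} := by
      show toLex (a, _) ∈ s
      rw [← hp₀a]
      exact hp₀
    by_cases hT : BddAbove {c | toLex (a, c) ∈ s}
    · obtain ⟨b, hb⟩ := hβ _ ⟨_, hfiber⟩ hT
      exact ⟨_, Prod.Lex.isLUB_toLex_of_isLUB_fiber hle hge hb⟩
    -- an unbounded fiber over `a` pushes every upper bound strictly past `a`
    have hgt : ∀ q ∈ upperBounds s, a < (ofLex q).1 := fun q hq =>
      (hge q hq).lt_of_ne fun h => hT ⟨(ofLex q).2, fun c hc => by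
        rcases Prod.Lex.le_iff.1 (hq hc) with h' | h'
        · exact absurd h' (h ▸ lt_irrefl a)
        · exact h'.2⟩
    obtain ⟨q, hq⟩ := hbdd
    have hIoi : (Ioi a).Nonempty := ⟨_, hgt q hq⟩
    refine ⟨_, Prod.Lex.isLUB_toLex_bot (a := wellFounded_lt.min _ hIoi)
      (fun p hp => (hle p hp).trans_lt (wellFounded_lt.min_mem _ hIoi))
      (fun q hq => wellFounded_lt.min_le (hgt q hq))⟩
  · exact ⟨_, Prod.Lex.isLUB_toLex_bot
      (fun p hp => (hle p hp).lt_of_ne fun h => haA ⟨p, hp, h⟩) hge⟩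

end DedekindComplete

section Paths

variable {α X : Type*}

theorem Monotone.joined_of_range_eq_Icc [LinearOrder α] [TopologicalSpace α] [OrderTopology α]
    {x y : α} [DenselyOrdered (Icc x y)] {f : unitInterval → α} (hf : Monotone f)
    (hrange : range f = Icc x y) : Joined x y := by
  have hmem : ∀ t, f t ∈ Icc x y := fun t => hrange ▸ mem_range_self t
  have hxy : x ≤ y := (hmem 0).1.trans (hmem 0).2
  obtain ⟨t₀, ht₀⟩ : x ∈ range f := hrange ▸ left_mem_Icc.2 hxy
  obtain ⟨t₁, ht₁⟩ : y ∈ range f := hrange ▸ right_mem_Icc.2 hxy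
  have hcont : Continuous fun t => (⟨f t, hmem t⟩ : Icc x y) :=
    Monotone.continuous_of_surjective (fun _ _ h => hf h) fun z => by
      obtain ⟨t, ht⟩ : z.1 ∈ range f := hrange.symm ▸ z.2
      exact ⟨t, Subtype.ext ht⟩
  exact ⟨⟨⟨f, continuous_subtype_val.comp hcont⟩,
    le_antisymm (ht₀ ▸ hf bot_le) (hmem 0).1, le_antisymm (hmem 1).2 (ht₁ ▸ hf le_top)⟩⟩

theorem DedekindComplete.joined_of_countable_dense [LinearOrder α] [TopologicalSpace α]
    [OrderTopology α] (hα : DedekindComplete α) {x y : α} (hxy : x ≤ y) {D : Set α}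
    (hD : D.Countable) (hdense : ∀ u v, x ≤ u → u < v → v ≤ y → ∃ d ∈ D, u < d ∧ d < v) :
    Joined x y := by
  let E := D ∩ Icc x y
  have : Countable E := (hD.mono inter_subset_left).to_subtype
  obtain ⟨ι⟩ := Order.embedding_from_countable_to_dense E unitInterval
  -- `f t` is the supremum of the points of `E` that `ι` places before time `t`
  let S : unitInterval → Set α := fun t => insert x (Subtype.val '' {e : E | ι e < t})
  have hSy : ∀ t, y ∈ upperBounds (S t) := fun t => by
    rintro _ (rfl | ⟨e, -, rfl⟩)
    exacts [hxy, e.2.2.2]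
  choose f hf using fun t => hα (S t) (insert_nonempty _ _) ⟨y, hSy t⟩
  have hfx : ∀ t, x ≤ f t := fun t => (hf t).1 (mem_insert _ _)
  have hsurj : ∀ z ∈ Icc x y, z ∈ range f := by
    intro z hz
    refine ⟨sSup (ι '' {e | e.1 < z}), le_antisymm ((hf _).2 ?_) (not_lt.1 fun hlt => ?_)⟩
    · rintro _ (rfl | ⟨e, he, rfl⟩)
      · exact hz.1
      obtain ⟨_, ⟨e', he', rfl⟩, hlt⟩ := lt_sSup_iff.1 (show ι e < _ from he)
      exact (lt_trans (show e.1 < e'.1 from ι.lt_iff_lt.1 hlt) he').le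
    · obtain ⟨d, hd, hfd, hdz⟩ := hdense _ z (hfx _) hlt hz.2
      obtain ⟨d', hd', hdd', hd'z⟩ := hdense d z ((hfx _).trans hfd.le) hdz hz.2
      let e : E := ⟨d, hd, (hfx _).trans hfd.le, hdz.le.trans hz.2⟩
      let e' : E := ⟨d', hd', (hfx _).trans (hfd.trans hdd').le, hd'z.le.trans hz.2⟩
      have hmem : d ∈ S (sSup (ι '' {e | e.1 < z})) := mem_insert_of_mem _
        ⟨e, (ι.lt_iff_lt.2 (show e < e' from hdd')).trans_le (le_sSup ⟨e', hd'z, rfl⟩), rfl⟩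
      exact absurd ((hf _).1 hmem) (not_le.2 hfd)
  have : DenselyOrdered (Icc x y) := ⟨fun u v huv => by
    obtain ⟨d, -, hud, hdv⟩ := hdense u v u.2.1 huv v.2.2
    exact ⟨⟨d, u.2.1.trans hud.le, hdv.le.trans v.2.2⟩, hud, hdv⟩⟩
  refine Monotone.joined_of_range_eq_Icc (fun s t hst => (hf s).mono (hf t) ?_)
    (subset_antisymm (range_subset_iff.2 fun t => ⟨hfx t, (hf t).2 (hSy t)⟩) hsurj)
  exact insert_subset_insert (image_mono fun _ he => lt_of_lt_of_le he hst)

theorem isSeqClosed_Ioi_of_countable_bddBelow [LinearOrder α] [TopologicalSpace α]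
    [ClosedIciTopology α] {a : α}
    (h : ∀ s ⊆ Ioi a, s.Countable → ∃ b ∈ Ioi a, b ∈ lowerBounds s) : IsSeqClosed (Ioi a) := by
  intro u p hu hlim
  obtain ⟨b, hab, hb⟩ := h (range u) (range_subset_iff.2 hu) (countable_range u)
  exact lt_of_lt_of_le hab (ge_of_tendsto' hlim fun n => hb ⟨n, rfl⟩)

theorem isSeqClosed_Iio_of_countable_bddAbove [LinearOrder α] [TopologicalSpace α]
    [ClosedIicTopology α] {a : α}
    (h : ∀ s ⊆ Iio a, s.Countable → ∃ b ∈ Iio a, b ∈ upperBounds s) : IsSeqClosed (Iio a) :=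
  isSeqClosed_Ioi_of_countable_bddBelow (α := αᵒᵈ) h

theorem pathComponent_eq_singleton_of_isSeqClosed [TopologicalSpace X] [T1Space X] {a : X}
    (h : IsSeqClosed {a}ᶜ) : pathComponent a = {a} := by
  refine subset_antisymm (fun b ⟨γ⟩ => ?_) (singleton_subset_iff.2 (mem_pathComponent_self a))
  have hclopen : IsClopen (γ ⁻¹' {a}ᶜ) :=
    ⟨(h.preimage γ.continuous.seqContinuous).isClosed, isOpen_compl_singleton.preimage γ.continuous⟩
  by_contra hb
  have h1 : (1 : unitInterval) ∈ γ ⁻¹' {a}ᶜ := by simpa [γ.target] using hb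
  rcases isClopen_iff.1 hclopen with he | he
  · exact he.subset h1
  · have h0 : (0 : unitInterval) ∈ γ ⁻¹' {a}ᶜ := he ▸ mem_univ 0
    exact h0 γ.source

end Paths

namespace SOmega

theorem isSuccLimit_omega_one : Order.IsSuccLimit (Cardinal.aleph 1).ord :=
  Cardinal.isSuccLimit_ord (Cardinal.aleph0_le_aleph 1)

noncomputable instance : OrderBot SOmega where
  bot := ⟨0, isSuccLimit_omega_one.pos⟩
  bot_le a := show (0 : Ordinal) ≤ a.1 from zero_le

instance : WellFoundedLT SOmega := inferInstanceAs (WellFoundedLT (Iio _))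

theorem succ_val_lt (a : SOmega) : Order.succ a.1 < (Cardinal.aleph 1).ord :=
  isSuccLimit_omega_one.succ_lt a.2

theorem exists_forall_lt_of_countable {s : Set SOmega} (hs : s.Countable) :
    ∃ b : SOmega, ∀ a ∈ s, a < b := by
  have := hs.to_subtype
  have hsup := Ordinal.iSup_lt_omega_one (f := fun a : s => Order.succ a.1.1)
    fun a => Cardinal.ord_aleph 1 ▸ succ_val_lt a.1
  rw [← Cardinal.ord_aleph] at hsup
  exact ⟨⟨_, hsup⟩, fun a ha => (Order.lt_succ a.1).trans_le
    (Ordinal.le_iSup (fun a : s => Order.succ a.1.1) ⟨a, ha⟩)⟩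

theorem countable_Iic (b : SOmega) : (Iic b).Countable := by
  have hIio : (Iio (Order.succ b.1)).Countable := by
    rw [← Cardinal.le_aleph0_iff_set_countable, Cardinal.mk_Iio_ordinal, Cardinal.lift_le_aleph0,
      ← Cardinal.lt_aleph_one_iff]
    exact Cardinal.lt_ord.1 (succ_val_lt b)
  exact (hIio.preimage Subtype.val_injective).mono fun a (ha : a ≤ b) =>
    show a.1 < Order.succ b.1 from Order.lt_succ_of_le ha

end SOmega

namespace LongLinePlus

noncomputable instance : OrderBot LongLinePlus :=
  inferInstanceAs (OrderBot (SOmega ×ₗ Ico (0 : ℝ) 1))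

theorem dedekindComplete : DedekindComplete LongLinePlus :=
  DedekindComplete.prodLex (α := SOmega)
    (DedekindComplete.of_conditionallyCompleteLattice.subtype (Ico (0 : ℝ) 1))

theorem bddAbove_of_countable {s : Set LongLinePlus} (hs : s.Countable) : BddAbove s := by
  obtain ⟨b, hb⟩ := SOmega.exists_forall_lt_of_countable
    (hs.image fun p : LongLinePlus => (ofLex p).1)
  exact ⟨toLex (b, ⊥), fun p hp => Prod.Lex.le_iff.2 (Or.inl (hb _ (mem_image_of_mem _ hp)))⟩

theorem exists_countable_dense (b : LongLinePlus) :
    ∃ D : Set LongLinePlus, D.Countable ∧ ∀ u v, u < v → v ≤ b → ∃ d ∈ D, u < d ∧ d < v := by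
  let Q : Set (Ico (0 : ℝ) 1) := Subtype.val ⁻¹' range ((↑) : ℚ → ℝ)
  have hQ : ∀ r r' : Ico (0 : ℝ) 1, r < r' → ∃ q ∈ Q, r < q ∧ q < r' := fun r r' h => by
    obtain ⟨q, hrq, hqr'⟩ := exists_rat_btwn (show (r : ℝ) < r' from h)
    exact ⟨⟨q, r.2.1.trans hrq.le, hqr'.trans r'.2.2⟩, ⟨q, rfl⟩, hrq, hqr'⟩
  refine ⟨toLex '' Iic (ofLex b).1 ×ˢ Q,
    ((SOmega.countable_Iic _).prod ((countable_range _).preimage Subtype.val_injective)).image _,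
    fun u v huv hvb => Prod.Lex.exists_mem_image_prod_between hQ huv ?_⟩
  exact (Prod.Lex.monotone_fst _ _ huv.le).trans (Prod.Lex.monotone_fst _ _ hvb)

instance : PathConnectedSpace LongLinePlus where
  nonempty := ⟨⊥⟩
  joined p q := by
    wlog hpq : p ≤ q generalizing p q
    · exact (this q p (le_of_not_ge hpq)).symm
    obtain ⟨D, hD, hdense⟩ := exists_countable_dense q
    exact dedekindComplete.joined_of_countable_dense hpq hD fun u v _ huv hv => hdense u v huv hv

end LongLinePlus

namespace LongLine

def pos (p : LongLinePlus) : LongLine := toLex (Sum.inr p)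

open Classical in
noncomputable def neg (p : LongLinePlus) : LongLine :=
  if h : ∃ y, y < p then toLex (Sum.inl (OrderDual.toDual (⟨p, h⟩ : LongLinePlusPos))) else pos p

theorem neg_of_exists_lt {p : LongLinePlus} (h : ∃ y, y < p) :
    neg p = toLex (Sum.inl (OrderDual.toDual (⟨p, h⟩ : LongLinePlusPos))) :=
  dif_pos h

theorem neg_of_not_exists_lt {p : LongLinePlus} (h : ¬∃ y, y < p) : neg p = pos p :=
  dif_neg h

theorem neg_bot : neg ⊥ = pos ⊥ :=
  neg_of_not_exists_lt fun ⟨_, h⟩ => not_lt_bot h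

theorem pos_strictMono : StrictMono pos := fun _ _ h => Sum.Lex.inr_lt_inr_iff.2 h

theorem neg_strictAnti : StrictAnti neg := by
  intro p q hpq
  rw [neg_of_exists_lt ⟨p, hpq⟩]
  by_cases hp : ∃ y, y < p
  · rw [neg_of_exists_lt hp]
    exact Sum.Lex.inl_lt_inl_iff.2 hpq
  · rw [neg_of_not_exists_lt hp]
    exact Sum.Lex.inl_lt_inr _ _

theorem neg_le_pos (p : LongLinePlus) : neg p ≤ pos p := by
  by_cases hp : ∃ y, y < p
  · rw [neg_of_exists_lt hp]
    exact Sum.Lex.inl_le_inr _ _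
  · rw [neg_of_not_exists_lt hp]

theorem range_pos : range pos = Ici (pos ⊥) := by
  refine subset_antisymm (range_subset_iff.2 fun p => pos_strictMono.monotone bot_le)
    fun z hz => ?_
  rcases z with a | p
  · exact absurd hz Sum.Lex.not_inr_le_inl
  · exact ⟨p, rfl⟩

theorem range_neg : range neg = Iic (pos ⊥) := by
  refine subset_antisymm (range_subset_iff.2 fun p => neg_bot ▸ neg_strictAnti.antitone bot_le)
    fun z hz => ?_
  rcases z with a | p
  · exact ⟨_, neg_of_exists_lt (OrderDual.ofDual a).2⟩
  · have hp : p = ⊥ := le_bot_iff.1 (Sum.Lex.inr_le_inr_iff.1 hz)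
    exact ⟨⊥, neg_bot.trans (congrArg pos hp.symm)⟩

theorem mem_range_pos_or_mem_range_neg (z : LongLine) : z ∈ range pos ∨ z ∈ range neg := by
  rw [range_pos, range_neg]
  exact le_total (pos ⊥) z

theorem continuous_pos : Continuous pos :=
  (pos_strictMono.isEmbedding_of_ordConnected (range_pos ▸ ordConnected_Ici)).continuous

theorem continuous_neg : Continuous neg := by
  have hmono : StrictMono (OrderDual.toDual ∘ neg) := neg_strictAnti
  have hconn : (range (OrderDual.toDual ∘ neg)).OrdConnected := by
    rw [range_comp, range_neg, OrderDual.toDual.image_eq_preimage_symm]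
    exact (ordConnected_Iic (a := pos ⊥)).dual
  exact continuous_ofDual.comp (hmono.isEmbedding_of_ordConnected hconn).continuous

instance : PathConnectedSpace LongLine := by
  rw [pathConnectedSpace_iff_univ, ← Iic_union_Ici (a := pos ⊥), ← range_neg, ← range_pos]
  exact (isPathConnected_range continuous_neg).union (isPathConnected_range continuous_pos)
    ⟨pos ⊥, ⟨⊥, neg_bot⟩, ⟨⊥, rfl⟩⟩

theorem bddAbove_bddBelow_of_countable {s : Set LongLine} (hs : s.Countable) :
    BddAbove s ∧ BddBelow s := by
  obtain ⟨b, hb⟩ := LongLinePlus.bddAbove_of_countable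
    ((hs.preimage pos_strictMono.injective).union (hs.preimage neg_strictAnti.injective))
  refine ⟨⟨pos b, fun z hz => ?_⟩, ⟨neg b, fun z hz => ?_⟩⟩ <;>
    rcases mem_range_pos_or_mem_range_neg z with ⟨p, rfl⟩ | ⟨p, rfl⟩
  · exact pos_strictMono.monotone (hb (Or.inl hz))
  · exact (neg_le_pos p).trans (pos_strictMono.monotone (hb (Or.inr hz)))
  · exact (neg_strictAnti.antitone (hb (Or.inl hz))).trans (neg_le_pos p)
  · exact neg_strictAnti.antitone (hb (Or.inr hz))

theorem toBar_strictMono : StrictMono toBar :=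
  fun _ _ h => WithBot.coe_lt_coe.2 (WithTop.coe_lt_coe.2 h)

theorem range_toBar : range toBar = Ioo ⊥ ⊤ := by
  refine subset_antisymm (range_subset_iff.2 fun z => ⟨WithBot.bot_lt_coe _,
    WithBot.coe_lt_coe.2 (WithTop.coe_lt_top z)⟩) fun w hw => ?_
  rcases w with _ | _ | z
  · exact absurd hw.1 (lt_irrefl _)
  · exact absurd hw.2 (lt_irrefl _)
  · exact ⟨z, rfl⟩

theorem continuous_toBar : Continuous toBar :=
  (toBar_strictMono.isEmbedding_of_ordConnected (range_toBar ▸ ordConnected_Ioo)).continuous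

end LongLine

namespace LongLineBar

theorem eq_bot_or_eq_top_or_mem_range_toBar (y : LongLineBar) :
    y = ⊥ ∨ y = ⊤ ∨ y ∈ range LongLine.toBar := by
  rcases y with _ | _ | z
  exacts [Or.inl rfl, Or.inr (Or.inl rfl), Or.inr (Or.inr ⟨z, rfl⟩)]

theorem isSeqClosed_Ioi_bot : IsSeqClosed (Ioi (⊥ : LongLineBar)) := by
  refine isSeqClosed_Ioi_of_countable_bddBelow fun s hs hc => ?_
  obtain ⟨b, hb⟩ := (LongLine.bddAbove_bddBelow_of_countable
    (hc.preimage LongLine.toBar_strictMono.injective)).2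
  refine ⟨b.toBar, WithBot.bot_lt_coe _, fun w hw => ?_⟩
  rcases eq_bot_or_eq_top_or_mem_range_toBar w with rfl | rfl | ⟨z, rfl⟩
  · exact absurd (hs hw) self_notMem_Ioi
  · exact le_top
  · exact LongLine.toBar_strictMono.monotone (hb hw)

theorem isSeqClosed_Iio_top : IsSeqClosed (Iio (⊤ : LongLineBar)) := by
  refine isSeqClosed_Iio_of_countable_bddAbove fun s hs hc => ?_
  obtain ⟨b, hb⟩ := (LongLine.bddAbove_bddBelow_of_countable
    (hc.preimage LongLine.toBar_strictMono.injective)).1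
  refine ⟨b.toBar, WithBot.coe_lt_coe.2 (WithTop.coe_lt_top b), fun w hw => ?_⟩
  rcases eq_bot_or_eq_top_or_mem_range_toBar w with rfl | rfl | ⟨z, rfl⟩
  · exact bot_le
  · exact absurd (hs hw) self_notMem_Iio
  · exact LongLine.toBar_strictMono.monotone (hb hw)

theorem pathComponent_bot : pathComponent (⊥ : LongLineBar) = {⊥} :=
  pathComponent_eq_singleton_of_isSeqClosed (Ioi_bot (α := LongLineBar) ▸ isSeqClosed_Ioi_bot)

theorem pathComponent_top : pathComponent (⊤ : LongLineBar) = {⊤} :=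
  pathComponent_eq_singleton_of_isSeqClosed (Iio_top (α := LongLineBar) ▸ isSeqClosed_Iio_top)

end LongLineBar

/-- The extended long line `L̄` has exactly three path components: `{-Ω}`, `{Ω}` and `L`. -/
theorem longLineBar_pathComponents :
    pathComponent (⊥ : LongLineBar) = {⊥} ∧
    pathComponent (⊤ : LongLineBar) = {⊤} ∧
    (∀ x : LongLine, pathComponent x.toBar = Set.range LongLine.toBar) ∧
    ∀ y : LongLineBar, y = ⊥ ∨ y = ⊤ ∨ y ∈ Set.range LongLine.toBar := by
  refine ⟨LongLineBar.pathComponent_bot, LongLineBar.pathComponent_top, fun x => ?_,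
    LongLineBar.eq_bot_or_eq_top_or_mem_range_toBar⟩
  refine subset_antisymm (fun w hw => ?_)
    ((isPathConnected_range LongLine.continuous_toBar).subset_pathComponent (mem_range_self x))
  have hx : x.toBar ∈ Ioo ⊥ ⊤ := LongLine.range_toBar ▸ mem_range_self x
  rcases LongLineBar.eq_bot_or_eq_top_or_mem_range_toBar w with rfl | rfl | hw
  · exact absurd (LongLineBar.pathComponent_bot ▸ mem_pathComponent_of_mem hw :
      x.toBar ∈ ({⊥} : Set _)) hx.1.ne'
  · exact absurd (LongLineBar.pathComponent_top ▸ mem_pathComponent_of_mem hw :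
      x.toBar ∈ ({⊤} : Set _)) hx.2.ne
  · exact hw
end

section
/- The automorphism group of the n-dimensional hypercube graph (vertices {±1}ⁿ, edges between vertices differing in exactly one coordinate) is isomorphic to the semidirect product (ℤ/2ℤ)ⁿ ⋊ Sₙ, where Sₙ acts on (ℤ/2ℤ)ⁿ by permuting coordinates. -/
/-- Adjacency in the `n`-dimensional hypercube graph: two vertices of `(ℤ/2ℤ)ⁿ`
(identified with `{±1}ⁿ`) are adjacent iff they differ in exactly one coordinate. -/
def hypercubeAdj (n : ℕ) (x y : Fin n → ZMod 2) : Prop := ∃! i, x i ≠ y i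

/-- The automorphism group of the `n`-dimensional hypercube graph, realized as the
subgroup of permutations of the vertex set preserving adjacency. -/
def hypercubeAut (n : ℕ) : Subgroup (Equiv.Perm (Fin n → ZMod 2)) where
  carrier := {e | ∀ x y, hypercubeAdj n (e x) (e y) ↔ hypercubeAdj n x y}
  one_mem' := by intro x y; rfl
  mul_mem' := by
    intro a b ha hb x y
    exact (ha (b x) (b y)).trans (hb x y)
  inv_mem' := by
    intro a ha x y
    simpa using (ha (a⁻¹ x) (a⁻¹ y)).symm

/-- The coordinate-permutation additive automorphism of `(ℤ/2ℤ)ⁿ` induced by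
`σ ∈ Sₙ`. -/
def permAddAut (n : ℕ) (σ : Equiv.Perm (Fin n)) :
    (Fin n → ZMod 2) ≃+ (Fin n → ZMod 2) :=
  { Equiv.piCongrLeft' (fun _ => ZMod 2) σ with map_add' := fun _ _ => rfl }

/-- The action of `Sₙ` on `(ℤ/2ℤ)ⁿ` by permuting coordinates, as a homomorphism to the
automorphism group. -/
def permHom (n : ℕ) : Equiv.Perm (Fin n) →* MulAut (Multiplicative (Fin n → ZMod 2)) where
  toFun σ := AddEquiv.toMultiplicative (permAddAut n σ)
  map_one' := by
    ext x
    rfl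
  map_mul' σ τ := by
    ext x
    rfl

/-!
The graph metric of the hypercube is the Hamming distance, so its automorphisms are Hamming
isometries. An automorphism fixing `0` permutes the neighbours `Pi.single i 1` of `0` by some
`σ`, and since `x i = 1` exactly when `Pi.single i 1` is closer to `x` than `0` is, it is the
coordinate permutation induced by `σ`. Composing with translations gives every automorphism, and
`(v, σ) ↦ (x ↦ v + σ • x)` is the faithful action of `(ℤ/2ℤ)ⁿ ⋊ Sₙ` on the vertices.
-/

open Function Finset

section Hamming
variable {ι α : Type*} [Fintype ι] [DecidableEq ι] [DecidableEq α]

lemma hammingDist_update_left_add (x y : ι → α) (i : ι) (a : α) :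
    hammingDist (update x i a) y + (if x i = y i then 0 else 1) =
      hammingDist x y + (if a = y i then 0 else 1) := by
  have key : ∀ z : ι → α, hammingDist z y =
      (if z i = y i then 0 else 1) + ∑ j ∈ univ.erase i, if z j = y j then 0 else 1 := by
    intro z
    rw [add_sum_erase _ (fun j => if z j = y j then 0 else 1) (mem_univ i), hammingDist,
      card_filter]
    simp only [ne_eq, ite_not]
  rw [key, key x]
  have : ∑ j ∈ univ.erase i, (if update x i a j = y j then 0 else 1) =
      ∑ j ∈ univ.erase i, if x j = y j then 0 else 1 :=
    sum_congr rfl fun j hj => by rw [update_of_ne (ne_of_mem_erase hj)]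
  simp only [update_self, this]
  ring

lemma hammingDist_update_lt_iff (x y : ι → α) (i : ι) (a : α) :
    hammingDist (update x i a) y < hammingDist x y ↔ a = y i ∧ x i ≠ y i := by
  have := hammingDist_update_left_add x y i a
  split_ifs at this <;> grind

end Hamming

section HammingGraph
variable {ι α : Type*} [Fintype ι] [DecidableEq α]

variable (ι α) in
def hammingGraph : SimpleGraph (ι → α) where
  Adj x y := hammingDist x y = 1
  symm.symm x y h := (hammingDist_comm y x).trans h
  loopless.irrefl x h := by simp at h

@[simp]
lemma hammingGraph_adj {x y : ι → α} : (hammingGraph ι α).Adj x y ↔ hammingDist x y = 1 := .rfl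

lemma hammingDist_le_length {x y : ι → α} (p : (hammingGraph ι α).Walk x y) :
    hammingDist x y ≤ p.length := by
  induction p with
  | nil => simp
  | cons h p ih =>
    rw [SimpleGraph.Walk.length_cons]
    exact (hammingDist_triangle _ _ _).trans (by rw [hammingGraph_adj.mp h]; omega)

lemma exists_walk_length_eq_hammingDist [DecidableEq ι] (x y : ι → α) :
    ∃ p : (hammingGraph ι α).Walk x y, p.length = hammingDist x y := by
  induction h : hammingDist x y generalizing x with
  | zero =>
    obtain rfl := hammingDist_eq_zero.mp h
    exact ⟨.nil, by simp⟩
  | succ k ih =>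
    obtain ⟨i, hi⟩ : ∃ i, x i ≠ y i := not_forall.mp fun hxy => by
      simp [funext hxy] at h
    have hstep := hammingDist_update_left_add x y i (y i)
    have hadj := hammingDist_update_left_add x x i (y i)
    simp only [hi, Ne.symm hi, if_false, if_true, hammingDist_self] at hstep hadj
    obtain ⟨p, hp⟩ := ih (update x i (y i)) (by omega)
    refine ⟨.cons (by rw [hammingGraph_adj, hammingDist_comm]; simpa using hadj) p, ?_⟩
    simp [hp]

lemma hammingGraph_preconnected [DecidableEq ι] : (hammingGraph ι α).Preconnected := fun x y =>
  (exists_walk_length_eq_hammingDist x y).elim fun p _ => p.reachable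

lemma hammingGraph_dist [DecidableEq ι] (x y : ι → α) :
    (hammingGraph ι α).dist x y = hammingDist x y := by
  obtain ⟨p, hp⟩ := exists_walk_length_eq_hammingDist x y
  obtain ⟨q, hq⟩ := p.reachable.exists_walk_length_eq_dist
  exact le_antisymm (hp ▸ SimpleGraph.dist_le p) (hq ▸ hammingDist_le_length q)

end HammingGraph

lemma SimpleGraph.Hom.dist_le {V W : Type*} {G : SimpleGraph V} {G' : SimpleGraph W}
    (f : G →g G') {u v : V} (h : G.Reachable u v) : G'.dist (f u) (f v) ≤ G.dist u v := by
  obtain ⟨p, hp⟩ := h.exists_walk_length_eq_dist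
  exact hp ▸ p.length_map f ▸ SimpleGraph.dist_le (p.map f)

namespace SemidirectProduct
variable {N G : Type*} [Group N] [Group G]

def toPermHom (φ : G →* MulAut N) : N ⋊[φ] G →* Equiv.Perm N :=
  lift (MulAction.toPermHom N N) ((MulAut.toPerm N).comp φ) fun g => by
    ext x y
    change φ g x * y = φ g (x * (φ g).symm y)
    simp

variable {φ : G →* MulAut N}

lemma toPermHom_apply (g : N ⋊[φ] G) (x : N) : toPermHom φ g x = g.left * φ g.right x :=
  rfl

lemma toPermHom_injective (hφ : Injective φ) : Injective (toPermHom φ) := by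
  refine (injective_iff_map_eq_one _).mpr fun g hg => ?_
  have hleft : g.left = 1 := by simpa [toPermHom_apply] using congr($hg 1)
  have hright : φ g.right = 1 := by
    ext x; simpa [toPermHom_apply, hleft] using congr($hg x)
  exact SemidirectProduct.ext hleft (hφ (hright.trans (map_one φ).symm))

end SemidirectProduct

namespace Hypercube
variable {n : ℕ}

lemma zmod_two_ne_zero_iff {a : ZMod 2} : a ≠ 0 ↔ a = 1 := by
  revert a; decide

lemma zmod_two_eq_of_eq_one_iff {a b : ZMod 2} (h : a = 1 ↔ b = 1) : a = b := by
  revert a b; decide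

lemma hypercubeAdj_iff_hammingDist {x y : Fin n → ZMod 2} :
    hypercubeAdj n x y ↔ hammingDist x y = 1 := by
  simp [hypercubeAdj, hammingDist, card_eq_one_iff_existsUnique]

lemma hypercubeAdj_zero_iff {x : Fin n → ZMod 2} :
    hypercubeAdj n 0 x ↔ ∃ i, x = Pi.single i 1 := by
  constructor
  · rintro ⟨i, hi, hunique⟩
    refine ⟨i, funext fun j => ?_⟩
    obtain rfl | hj := eq_or_ne j i
    · simpa using zmod_two_ne_zero_iff.mp (Ne.symm hi)
    · simpa [hj] using (not_imp_comm.mp (hunique j) hj).symm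
  · rintro ⟨i, rfl⟩
    exact ⟨i, by simp, fun j hj => by_contra fun hji => hj (by simp [hji])⟩

lemma hammingDist_single_lt_iff {ι : Type*} [Fintype ι] [DecidableEq ι] (x : ι → ZMod 2)
    (i : ι) : hammingDist (Pi.single i 1) x < hammingDist 0 x ↔ x i = 1 := by
  rw [Pi.single, hammingDist_update_lt_iff]
  simp [eq_comm, zmod_two_ne_zero_iff]

lemma hammingDist_apply_of_mem_hypercubeAut {e : Equiv.Perm (Fin n → ZMod 2)}
    (he : e ∈ hypercubeAut n) (x y : Fin n → ZMod 2) :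
    hammingDist (e x) (e y) = hammingDist x y := by
  have lipschitz : ∀ f ∈ hypercubeAut n, ∀ x y, hammingDist (f x) (f y) ≤ hammingDist x y := by
    intro f hf x y
    let φ : hammingGraph (Fin n) (ZMod 2) →g hammingGraph (Fin n) (ZMod 2) :=
      ⟨f, fun {x y} h => hypercubeAdj_iff_hammingDist.mp <|
        (hf x y).mpr (hypercubeAdj_iff_hammingDist.mpr h)⟩
    have := φ.dist_le (hammingGraph_preconnected x y)
    rwa [hammingGraph_dist, hammingGraph_dist] at this
  refine le_antisymm (lipschitz e he x y) ?_
  simpa using lipschitz e⁻¹ (inv_mem he) (e x) (e y)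

lemma exists_perm_eq_permAddAut {e : Equiv.Perm (Fin n → ZMod 2)} (he : e ∈ hypercubeAut n)
    (h0 : e 0 = 0) : ∃ σ : Equiv.Perm (Fin n), ∀ x, e x = permAddAut n σ x := by
  have hsingle (i : Fin n) : ∃ j, e (Pi.single i 1) = Pi.single j 1 :=
    hypercubeAdj_zero_iff.mp (h0 ▸ (he 0 _).mpr (hypercubeAdj_zero_iff.mpr ⟨i, rfl⟩))
  choose τ hτ using hsingle
  have hτ_inj : Injective τ := fun i j hij => by
    have := congr_fun (e.injective ((hτ i).trans (hij ▸ (hτ j).symm))) i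
    by_contra hne
    simp [Ne.symm hne] at this
  -- `x i = 1` iff `Pi.single i 1` is strictly closer to `x` than `0` is; `e` fixes `0` and
  -- preserves Hamming distance.
  have hcoord (x : Fin n → ZMod 2) (i : Fin n) : e x (τ i) = x i := by
    have hzero : hammingDist 0 (e x) = hammingDist 0 x := by
      rw [← hammingDist_apply_of_mem_hypercubeAut he 0 x, h0]
    refine zmod_two_eq_of_eq_one_iff ?_
    rw [← hammingDist_single_lt_iff, ← hammingDist_single_lt_iff, ← hτ,
      hammingDist_apply_of_mem_hypercubeAut he, hzero]
  let σ := Equiv.ofBijective τ (Finite.injective_iff_bijective.mp hτ_inj)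
  refine ⟨σ, fun x => funext fun j => ?_⟩
  have := hcoord x (σ.symm j)
  rwa [show τ (σ.symm j) = j from σ.apply_symm_apply j] at this

open SemidirectProduct

lemma permAddAut_apply (σ : Equiv.Perm (Fin n)) (x : Fin n → ZMod 2) (i : Fin n) :
    permAddAut n σ x i = x (σ.symm i) :=
  rfl

def affineAction : Multiplicative (Fin n → ZMod 2) ⋊[permHom n] Equiv.Perm (Fin n) →*
    Equiv.Perm (Fin n → ZMod 2) :=
  (Multiplicative.toAdd.permCongrHom : _ ≃* _).toMonoidHom.comp (toPermHom (permHom n))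

lemma affineAction_apply
    (g : Multiplicative (Fin n → ZMod 2) ⋊[permHom n] Equiv.Perm (Fin n)) (x : Fin n → ZMod 2) :
    affineAction g x = Multiplicative.toAdd g.left + permAddAut n g.right x :=
  rfl

lemma affineAction_mem_hypercubeAut
    (g : Multiplicative (Fin n → ZMod 2) ⋊[permHom n] Equiv.Perm (Fin n)) :
    affineAction g ∈ hypercubeAut n := by
  intro x y
  simp only [hypercubeAdj, affineAction_apply, Pi.add_apply, ne_eq, add_right_inj]
  exact g.right.symm.existsUnique_congr_right (q := fun i => x i ≠ y i)

lemma permHom_injective : Injective (permHom n) := by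
  refine (injective_iff_map_eq_one _).mpr fun σ hσ => Equiv.ext fun i => ?_
  have h : permAddAut n σ (Pi.single i 1) = Pi.single i 1 :=
    DFunLike.congr_fun hσ (Multiplicative.ofAdd (Pi.single i 1))
  simpa [permAddAut_apply, Pi.single_apply] using congr_fun h (σ i)

lemma affineAction_injective : Injective (affineAction (n := n)) :=
  Multiplicative.toAdd.permCongrHom.injective.comp (toPermHom_injective permHom_injective)

lemma range_affineAction : (affineAction (n := n)).range = hypercubeAut n := by
  refine le_antisymm (by rintro _ ⟨g, rfl⟩; exact affineAction_mem_hypercubeAut g) fun e he => ?_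
  let t := affineAction (inl (Multiplicative.ofAdd (e 0)))
  have ht0 : t 0 = e 0 := by simp [t, affineAction_apply]
  have hf : t⁻¹ * e ∈ hypercubeAut n := mul_mem (inv_mem (affineAction_mem_hypercubeAut _)) he
  obtain ⟨σ, hσ⟩ := exists_perm_eq_permAddAut hf (by simp [← ht0])
  have hσ' : affineAction (inr σ) = t⁻¹ * e :=
    Equiv.ext fun x => by simp [affineAction_apply, hσ]
  exact ⟨inl (Multiplicative.ofAdd (e 0)) * inr σ, by rw [map_mul, hσ', mul_inv_cancel_left]⟩

end Hypercube

/-- The automorphism group of the `n`-dimensional hypercube graph is isomorphic to the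
semidirect product `(ℤ/2ℤ)ⁿ ⋊ Sₙ`, with `Sₙ` acting by permuting coordinates. -/
theorem hypercubeAut_iso_semidirect (n : ℕ) :
    Nonempty ((hypercubeAut n) ≃*
      SemidirectProduct (Multiplicative (Fin n → ZMod 2)) (Equiv.Perm (Fin n)) (permHom n)) :=
  ⟨(MulEquiv.subgroupCongr Hypercube.range_affineAction.symm).trans
    (MonoidHom.ofInjective Hypercube.affineAction_injective).symm⟩
end
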